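/- For every integer K ≥ 2, 4/3 - 2/(3(3K-1)) < K / H_K, where H_K = ∑_{i=1}^{K} 1/i. -/

import Mathlib

/-! Every term of `H K` after the first is at most `1/2`, so `H K ≤ (K + 1) / 2` and
`K / H K ≥ 2K / (K + 1)`. The latter exceeds `4/3 - 2/(3(3K - 1)) = 2(2K - 1)/(3K - 1)`
because the difference of the cross-multiplied sides is `(K - 1)² > 0`. -/

noncomputable def H (K : ℕ) : ℝ := ∑ i ∈ Finset.range K, (1 : ℝ) / (i + 1)

lemma H_succ (n : ℕ) : H (n + 1) = H n + 1 / ((n : ℝ) + 1) :=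
  Finset.sum_range_succ _ _

lemma H_pos {K : ℕ} (hK : K ≠ 0) : 0 < H K :=
  Finset.sum_pos (fun _ _ => by positivity) (Finset.nonempty_range_iff.mpr hK)

lemma H_le_succ_div_two (K : ℕ) : H K ≤ ((K : ℝ) + 1) / 2 := by
  induction K with
  | zero => norm_num [H]
  | succ n ih =>
    rw [H_succ]
    rcases Nat.eq_zero_or_pos n with rfl | hn
    · norm_num [H]
    · have hterm : 1 / ((n : ℝ) + 1) ≤ 1 / 2 :=
        one_div_le_one_div_of_le two_pos (by exact_mod_cast Nat.succ_le_succ hn)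
      push_cast
      linarith

lemma four_thirds_sub_lt_two_mul_div_add_one {x : ℝ} (hx : 1 < x) :
    4 / 3 - 2 / (3 * (3 * x - 1)) < 2 * x / (x + 1) := by
  have hd : 0 < 3 * x - 1 := by linarith
  have hsq : 0 < (x - 1) ^ 2 := pow_pos (sub_pos.2 hx) 2
  rw [show 4 / 3 - 2 / (3 * (3 * x - 1)) = 2 * (2 * x - 1) / (3 * x - 1) by field_simp; ring,
    div_lt_div_iff₀ hd (by linarith)]
  nlinarith [hsq]

lemma two_mul_div_add_one_le_div_H (K : ℕ) :
    2 * (K : ℝ) / (K + 1) ≤ K / H K := by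
  rcases Nat.eq_zero_or_pos K with rfl | hK
  · simp
  · calc 2 * (K : ℝ) / (K + 1) = K / ((K + 1) / 2) := by field_simp
      _ ≤ K / H K := div_le_div_of_nonneg_left (Nat.cast_nonneg K) (H_pos hK.ne')
          (H_le_succ_div_two K)

theorem cascade_lt_dof (K : ℕ) (hK : 2 ≤ K) :
    (4 : ℝ) / 3 - 2 / (3 * (3 * K - 1)) < (K : ℝ) / H K :=
  (four_thirds_sub_lt_two_mul_div_add_one (by exact_mod_cast hK)).trans_le
    (two_mul_div_add_one_le_div_H K)
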